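/- For any k ≥ 2 unit vectors ξ₁,…,ξ_k in ℝ³ spanning configurations in general position, after applying a suitable conformal transformation of S² to the points ξ_j, there exist positive real numbers f₁,…,f_k with f₁ξ₁ + ⋯ + f_kξ_k = 0. Precisely: for any k ≥ 2 distinct points on S², there is a Möbius transformation of S² moving them to points whose position vectors admit a vanishing positive linear combination. -/

import Mathlib

/-- The Minkowski quadratic form on ℝ⁴. -/
def minkowskiForm (y : Fin 4 → ℝ) : ℝ := y 0 ^ 2 - y 1 ^ 2 - y 2 ^ 2 - y 3 ^ 2

/-- A map of the unit sphere S² ⊂ ℝ³ is a Möbius transformation if it is induced by a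
Lorentz transformation of ℝ^{1,3} acting projectively on the light cone: for each unit
vector x, the lift (1, x) is carried by A to a vector with positive time component whose
projectivization gives the image point. -/
def IsMoebiusS2 (T : EuclideanSpace ℝ (Fin 3) → EuclideanSpace ℝ (Fin 3)) : Prop :=
  ∃ A : Matrix (Fin 4) (Fin 4) ℝ,
    (∀ y : Fin 4 → ℝ, minkowskiForm (A.mulVec y) = minkowskiForm y) ∧
    ∀ x : EuclideanSpace ℝ (Fin 3), ‖x‖ = 1 →
      0 < A.mulVec (Fin.cons 1 (fun i => x i)) 0 ∧
      T x = (WithLp.equiv 2 (Fin 3 → ℝ)).symm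
        ((A.mulVec (Fin.cons 1 (fun i => x i)) 0)⁻¹ •
          fun i : Fin 3 => A.mulVec (Fin.cons 1 (fun j => x j)) i.succ)

/-!
Put `u = ∑ ξⱼ`. Since the `ξⱼ` are distinct unit vectors, `‖u‖ < k` by strict convexity, so
`(k, u) = ∑ (1, ξⱼ)` is a future timelike vector of `ℝ^{1,3}`. The Lorentz boost `B` bringing
`(k, u)` to rest induces a Möbius transformation `T` of `S²` with `B (1, ξ) = f(ξ) • (1, T ξ)` and
`f(ξ) > 0`. Hence `∑ f(ξⱼ) • T ξⱼ` is the spatial part of `B (k, u)`, which vanishes.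
-/

open Matrix

theorem dotProduct_sq_le {ι : Type*} [Fintype ι] (v w : ι → ℝ) :
    (v ⬝ᵥ w) ^ 2 ≤ (v ⬝ᵥ v) * (w ⬝ᵥ w) := by
  simpa only [dotProduct, sq] using Finset.sum_mul_sq_le_sq_mul_sq Finset.univ v w

section Boost

variable {n : ℕ} (p₀ : ℝ) (v : Fin n → ℝ)

def lorentzForm (y : Fin (n + 1) → ℝ) : ℝ := y 0 ^ 2 - Fin.tail y ⬝ᵥ Fin.tail y

noncomputable def restMass : ℝ := √(p₀ ^ 2 - v ⬝ᵥ v)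

/-- The boost of `ℝ^{1,n}` with velocity `v / p₀`. -/
noncomputable def boost : Matrix (Fin (n + 1)) (Fin (n + 1)) ℝ :=
  let m := restMass p₀ v
  Matrix.of <| Fin.cons (Fin.cons (p₀ / m) (-(m⁻¹ • v)))
    fun i => Fin.cons (-(v i / m)) (Pi.single i 1 + (v i / (m * (p₀ + m))) • v)

theorem boost_mulVec (y : Fin (n + 1) → ℝ) :
    boost p₀ v *ᵥ y = Fin.cons ((p₀ * y 0 - v ⬝ᵥ Fin.tail y) / restMass p₀ v)
      (Fin.tail y + ((v ⬝ᵥ Fin.tail y / (p₀ + restMass p₀ v) - y 0) / restMass p₀ v) • v) := by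
  ext i
  refine Fin.cases ?_ (fun i => ?_) i
  · simp only [boost, mulVec, dotProduct, Fin.sum_univ_succ, of_apply, Fin.cons_zero,
      Fin.cons_succ, Pi.neg_apply, Pi.smul_apply, smul_eq_mul, Fin.tail]
    simp_rw [neg_mul, Finset.sum_neg_distrib, mul_assoc, ← Finset.mul_sum]
    ring
  · simp only [boost, mulVec, dotProduct, Fin.sum_univ_succ, of_apply, Fin.cons_zero,
      Fin.cons_succ, Pi.add_apply, Pi.smul_apply, smul_eq_mul, Pi.single_apply, Fin.tail]
    simp_rw [add_mul, Finset.sum_add_distrib, ite_mul, one_mul, zero_mul, Finset.sum_ite_eq',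
      Finset.mem_univ, if_true, mul_assoc, ← Finset.mul_sum, div_eq_mul_inv, mul_inv]
    ring

variable {p₀ v}

theorem restMass_pos (hv : v ⬝ᵥ v < p₀ ^ 2) : 0 < restMass p₀ v :=
  Real.sqrt_pos.2 (sub_pos.2 hv)

theorem restMass_sq (hv : v ⬝ᵥ v < p₀ ^ 2) : restMass p₀ v ^ 2 = p₀ ^ 2 - v ⬝ᵥ v :=
  Real.sq_sqrt (sub_nonneg.2 hv.le)

theorem boost_mulVec_cons_self (hp₀ : 0 < p₀) (hv : v ⬝ᵥ v < p₀ ^ 2) :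
    boost p₀ v *ᵥ Fin.cons p₀ v = Fin.cons (restMass p₀ v) 0 := by
  have hm := restMass_pos hv
  have hm2 := restMass_sq hv
  have hrapidity : (v ⬝ᵥ v / (p₀ + restMass p₀ v) - p₀) / restMass p₀ v = -1 := by
    field_simp
    nlinarith
  rw [boost_mulVec, Fin.cons_zero, Fin.tail_cons, hrapidity, neg_one_smul, add_neg_cancel]
  congr 1
  field_simp
  linarith

theorem lorentzForm_boost_mulVec (hp₀ : 0 < p₀) (hv : v ⬝ᵥ v < p₀ ^ 2) (y : Fin (n + 1) → ℝ) :
    lorentzForm (boost p₀ v *ᵥ y) = lorentzForm y := by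
  have hm := restMass_pos hv
  have hvv : v ⬝ᵥ v = p₀ ^ 2 - restMass p₀ v ^ 2 := by rw [restMass_sq hv]; ring
  simp only [lorentzForm, boost_mulVec, Fin.cons_zero, Fin.tail_cons, add_dotProduct,
    dotProduct_add, smul_dotProduct, dotProduct_smul, smul_eq_mul, hvv, dotProduct_comm v]
  field_simp
  ring

theorem boost_mulVec_zero_pos (hp₀ : 0 < p₀) (hv : v ⬝ᵥ v < p₀ ^ 2) {y : Fin (n + 1) → ℝ}
    (hy₀ : 0 < y 0) (hy : Fin.tail y ⬝ᵥ Fin.tail y ≤ y 0 ^ 2) : 0 < (boost p₀ v *ᵥ y) 0 := by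
  rw [boost_mulVec, Fin.cons_zero]
  refine div_pos ?_ (restMass_pos hv)
  have hvv : 0 ≤ v ⬝ᵥ v := by simpa using dotProduct_self_star_nonneg v
  have hsq : (v ⬝ᵥ Fin.tail y) ^ 2 < (p₀ * y 0) ^ 2 :=
    calc (v ⬝ᵥ Fin.tail y) ^ 2 ≤ (v ⬝ᵥ v) * (Fin.tail y ⬝ᵥ Fin.tail y) := dotProduct_sq_le _ _
      _ ≤ (v ⬝ᵥ v) * y 0 ^ 2 := mul_le_mul_of_nonneg_left hy hvv
      _ < p₀ ^ 2 * y 0 ^ 2 := mul_lt_mul_of_pos_right hv (by positivity)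
      _ = (p₀ * y 0) ^ 2 := (mul_pow _ _ _).symm
  linarith [(abs_lt_of_sq_lt_sq' hsq (by positivity)).2]

end Boost

theorem EuclideanSpace.real_norm_sq_eq_dotProduct {ι : Type*} [Fintype ι]
    (x : EuclideanSpace ℝ ι) : ‖x‖ ^ 2 = x.ofLp ⬝ᵥ x.ofLp := by
  rw [EuclideanSpace.real_norm_sq_eq]
  simp [dotProduct, sq]

theorem norm_sum_lt_card {E ι : Type*} [NormedAddCommGroup E] [NormedSpace ℝ E]
    [StrictConvexSpace ℝ E] [Fintype ι] {ξ : ι → E} (hξ : ∀ j, ‖ξ j‖ ≤ 1) {a b : ι}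
    (hab : ξ a ≠ ξ b) : ‖∑ j, ξ j‖ < Fintype.card ι := by
  have hcard : (0 : ℝ) < Fintype.card ι := Nat.cast_pos.2 (Fintype.card_pos_iff.2 ⟨a⟩)
  have hmean := norm_sum_lt_of_strictConvexSpace (t := Finset.univ)
    (w := fun _ => ((Fintype.card ι : ℝ))⁻¹) (fun _ _ => by positivity) (by simp [hcard.ne'])
    (Finset.mem_univ a) (Finset.mem_univ b) hab (by positivity) (by positivity) fun j _ => hξ j
  rwa [← Finset.smul_sum, norm_smul, Real.norm_of_nonneg (by positivity), inv_mul_lt_iff₀ hcard,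
    mul_one] at hmean

section ProjectiveMap

variable {n : ℕ}

noncomputable def projectiveMap (A : Matrix (Fin (n + 1)) (Fin (n + 1)) ℝ)
    (x : EuclideanSpace ℝ (Fin n)) : EuclideanSpace ℝ (Fin n) :=
  WithLp.toLp 2 (((A *ᵥ Fin.cons 1 x.ofLp) 0)⁻¹ • Fin.tail (A *ᵥ Fin.cons 1 x.ofLp))

theorem sum_cons_one {ι : Type*} [Fintype ι] (ξ : ι → EuclideanSpace ℝ (Fin n)) :
    ∑ j, (Fin.cons 1 (ξ j).ofLp : Fin (n + 1) → ℝ) =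
      Fin.cons (Fintype.card ι : ℝ) (∑ j, ξ j).ofLp := by
  ext i
  refine Fin.cases ?_ (fun i => ?_) i <;> simp [Finset.sum_apply, WithLp.ofLp_sum]

theorem sum_smul_projectiveMap {ι : Type*} [Fintype ι] (A : Matrix (Fin (n + 1)) (Fin (n + 1)) ℝ)
    (ξ : ι → EuclideanSpace ℝ (Fin n)) (hξ : ∀ j, (A *ᵥ Fin.cons 1 (ξ j).ofLp) 0 ≠ 0) :
    ∑ j, (A *ᵥ Fin.cons 1 (ξ j).ofLp) 0 • projectiveMap A (ξ j) =
      WithLp.toLp 2 (Fin.tail (A *ᵥ Fin.cons (Fintype.card ι : ℝ) (∑ j, ξ j).ofLp)) := by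
  simp_rw [projectiveMap, ← WithLp.toLp_smul, smul_smul, mul_inv_cancel₀ (hξ _), one_smul,
    ← WithLp.toLp_sum, ← sum_cons_one, mulVec_sum]
  congr 1
  ext i
  simp [Fin.tail, Finset.sum_apply]

end ProjectiveMap

theorem minkowskiForm_eq_lorentzForm : minkowskiForm = lorentzForm := by
  funext y
  simp only [minkowskiForm, lorentzForm, dotProduct, Fin.tail, Fin.sum_univ_three,
    Fin.succ_zero_eq_one, Fin.succ_one_eq_two, Fin.reduceSucc]
  ring

theorem isMoebiusS2_projectiveMap {A : Matrix (Fin 4) (Fin 4) ℝ}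
    (hA : ∀ y, lorentzForm (A *ᵥ y) = lorentzForm y)
    (hpos : ∀ x : EuclideanSpace ℝ (Fin 3), ‖x‖ = 1 → 0 < (A *ᵥ Fin.cons 1 x.ofLp) 0) :
    IsMoebiusS2 (projectiveMap A) :=
  ⟨A, by rwa [minkowskiForm_eq_lorentzForm], fun x hx => ⟨hpos x hx, rfl⟩⟩

/-- Any k ≥ 2 distinct points on S² can be moved by a Möbius transformation of S² to a
configuration balanced with positive weights. -/
theorem moebius_balancing (k : ℕ) (hk : 2 ≤ k)
    (ξ : Fin k → EuclideanSpace ℝ (Fin 3)) (hunit : ∀ j, ‖ξ j‖ = 1)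
    (hdist : Function.Injective ξ) :
    ∃ T : EuclideanSpace ℝ (Fin 3) → EuclideanSpace ℝ (Fin 3), IsMoebiusS2 T ∧
      ∃ f : Fin k → ℝ, (∀ j, 0 < f j) ∧ ∑ j, f j • T (ξ j) = 0 := by
  have hk₀ : (0 : ℝ) < k := by positivity
  have hne : ξ ⟨0, by omega⟩ ≠ ξ ⟨1, by omega⟩ := hdist.ne (by simp [Fin.ext_iff])
  set v := (∑ j, ξ j).ofLp
  have hv : v ⬝ᵥ v < (k : ℝ) ^ 2 := by
    have h := norm_sum_lt_card (fun j => (hunit j).le) hne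
    rw [Fintype.card_fin] at h
    rw [← EuclideanSpace.real_norm_sq_eq_dotProduct]
    exact pow_lt_pow_left₀ h (norm_nonneg _) two_ne_zero
  have hpos : ∀ x : EuclideanSpace ℝ (Fin 3), ‖x‖ = 1 →
      0 < (boost k v *ᵥ Fin.cons 1 x.ofLp) 0 := fun x hx =>
    boost_mulVec_zero_pos hk₀ hv one_pos
      (by rw [Fin.tail_cons, ← EuclideanSpace.real_norm_sq_eq_dotProduct, hx]; rfl)
  refine ⟨projectiveMap (boost k v),
    isMoebiusS2_projectiveMap (lorentzForm_boost_mulVec hk₀ hv) hpos,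
    fun j => (boost k v *ᵥ Fin.cons 1 (ξ j).ofLp) 0, fun j => hpos _ (hunit j), ?_⟩
  rw [sum_smul_projectiveMap _ _ fun j => (hpos _ (hunit j)).ne', Fintype.card_fin,
    boost_mulVec_cons_self hk₀ hv, Fin.tail_cons, WithLp.toLp_zero]
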